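/- arXiv:2210.07754 — 4 statements merged into one kernel-verified Lean document; each statement's English description precedes it below -/
import Mathlib

section
/- For integers q ≥ 2, L ≥ 2, the function f_{q,L} : Δ([q]) → R defined by f_{q,L}(P) = E_{(X_1,...,X_L)~P^{⊗L}}[plur(X_1,...,X_L)] is Schur convex: whenever probability vectors P majorizes Q, f_{q,L}(P) ≥ f_{q,L}(Q). -/
/-!
Sort `P` and `Q` decreasingly: `fqL` and majorization are invariant under permutations, and for
sorted vectors majorization is the comparison of prefix sums. Along the segment from `Q` to `P`
the derivative of `fqL` is `∑ a, (P a - Q a) * ∂_a fqL`, which Abel summation makes nonnegative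
as soon as `a ↦ ∂_a fqL w` is nonnegative and antitone for every nonnegative antitone `w`
(the Schur–Ostrowski criterion). Here `∂_a fqL w = ∑ m, E[plur X | X m = a]`. If `w b ≤ w a`,
swapping `a` and `b` in all coordinates but the `m`-th is an involution of `{x | x m = a}` that
exchanges the numbers of `a`s and `b`s among the other coordinates; hence it moves the weight
`∏ j ≠ m, w (x j)` and the plurality of `x` in the same direction, and pairing `x` with its image
gives `E[plur X | X m = b] ≤ E[plur X | X m = a]`.
-/

open Finset

/-- Sum of the `k` largest entries of `a`. -/
noncomputable def kMaxSum {d : ℕ} (a : Fin d → ℝ) (k : ℕ) : ℝ :=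
  sSup ((fun s : Finset (Fin d) => ∑ i ∈ s, a i) '' {s : Finset (Fin d) | s.card = k})

/-- `a` majorizes `b`. -/
def Majorizes {d : ℕ} (a b : Fin d → ℝ) : Prop :=
  (∀ k : ℕ, kMaxSum b k ≤ kMaxSum a k) ∧ ∑ i, a i = ∑ i, b i

/-- The plurality of a tuple of symbols. -/
def plur {q L : ℕ} (x : Fin L → Fin q) : ℕ :=
  Finset.univ.sup fun a : Fin q => (Finset.univ.filter fun i => x i = a).card

/-- `f_{q,L}(P)`: the expected plurality of `L` i.i.d. samples from `P`. -/
noncomputable def fqL (q L : ℕ) (P : Fin q → ℝ) : ℝ :=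
  ∑ x : Fin L → Fin q, (∏ i, P (x i)) * (plur x : ℝ)

open Function

theorem sum_mul_nonneg_of_antitone_of_sum_Iic_nonneg {R : Type*} [CommRing R] [LinearOrder R]
    [IsStrictOrderedRing R] :
    ∀ {n : ℕ} {d h : Fin n → R}, Antitone h → 0 ≤ h → (∀ k, 0 ≤ ∑ j ≤ k, d j) →
      0 ≤ ∑ j, d j * h j
  | 0, _, _, _, _, _ => by simp
  | n + 1, d, h, hh, h0, hd => by
    have hsplit : ∑ j, d j * h j
        = ∑ j : Fin n, d j.castSucc * (h j.castSucc - h (Fin.last n))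
          + (∑ j, d j) * h (Fin.last n) := by
      simp only [Fin.sum_univ_castSucc, mul_sub, sum_sub_distrib, add_mul, sum_mul]
      ring
    rw [hsplit]
    refine add_nonneg (sum_mul_nonneg_of_antitone_of_sum_Iic_nonneg ?_ ?_ ?_) ?_
    · exact fun i j hij => sub_le_sub_right (hh (Fin.castSucc_le_castSucc_iff.2 hij)) _
    · exact fun j => sub_nonneg.2 (hh (Fin.le_last _))
    · intro k
      simpa [Fin.sum_Iic_castSucc] using hd k.castSucc
    · refine mul_nonneg ?_ (h0 _)
      simpa [← Fin.top_eq_last] using hd (Fin.last n)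

theorem sum_le_sum_Iic_of_antitone {ι M : Type*} [LinearOrder ι] [LocallyFiniteOrderBot ι]
    [AddCommGroup M] [LinearOrder M] [IsOrderedAddMonoid M] {a : ι → M} (ha : Antitone a)
    (k : ι) {s : Finset ι} (hs : #s = #(Iic k)) : ∑ i ∈ s, a i ≤ ∑ i ≤ k, a i := by
  rw [← sub_nonneg, ← sum_sdiff_sub_sum_sdiff, sub_nonneg]
  calc ∑ i ∈ s \ Iic k, a i ≤ #(s \ Iic k) • a k :=
        sum_le_card_nsmul _ _ _ fun i hi => ha (le_of_lt (by simpa using (mem_sdiff.1 hi).2))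
    _ = #(Iic k \ s) • a k := by rw [card_sdiff_comm hs]
    _ ≤ ∑ i ∈ Iic k \ s, a i :=
        card_nsmul_le_sum _ _ _ fun i hi => ha (mem_Iic.1 (mem_sdiff.1 hi).1)

theorem sum_comp_mul_le_of_involutive {α R : Type*} [CommRing R] [LinearOrder R]
    [IsStrictOrderedRing R] {s : Finset α} {ι : α → α} (hι : Involutive ι)
    (hs : ∀ x ∈ s, ι x ∈ s) {f g : α → R}
    (hfg : ∀ x ∈ s, 0 ≤ (f x - f (ι x)) * (g x - g (ι x))) :
    ∑ x ∈ s, f (ι x) * g x ≤ ∑ x ∈ s, f x * g x := by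
  have hreindex : ∀ u : α → R, ∑ x ∈ s, u (ι x) = ∑ x ∈ s, u x := fun u =>
    sum_nbij' ι ι hs hs (fun x _ => hι x) (fun x _ => hι x) fun _ _ => rfl
  have h := sum_nonneg hfg
  have hcross := hreindex fun x => f x * g (ι x)
  have hdiag := hreindex fun x => f (ι x) * g (ι x)
  simp only [hι _] at hcross hdiag
  simp only [sub_mul, mul_sub, sum_sub_distrib] at h
  linarith

theorem pow_mul_pow_le_pow_mul_pow {R : Type*} [CommSemiring R] [PartialOrder R]
    [IsOrderedRing R] {x y : R} (hy : 0 ≤ y) (hxy : y ≤ x) {m n : ℕ} (hmn : m ≤ n) :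
    x ^ m * y ^ n ≤ x ^ n * y ^ m := by
  obtain ⟨c, rfl⟩ := Nat.exists_eq_add_of_le hmn
  calc x ^ m * y ^ (m + c) = x ^ m * y ^ m * y ^ c := by ring
    _ ≤ x ^ m * y ^ m * x ^ c :=
        mul_le_mul_of_nonneg_left (pow_le_pow_left₀ hy hxy c)
          (mul_nonneg (pow_nonneg (hy.trans hxy) m) (pow_nonneg hy m))
    _ = x ^ (m + c) * y ^ m := by ring

theorem prod_comp_eq_pow_mul_pow_mul {ι α M : Type*} [DecidableEq α] [CommMonoid M]
    (s : Finset ι) (x : ι → α) (g : α → M) {a b : α} (hab : a ≠ b) :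
    ∏ i ∈ s, g (x i) = g a ^ #{i ∈ s | x i = a} * g b ^ #{i ∈ s | x i = b}
      * ∏ i ∈ s with x i ≠ a ∧ x i ≠ b, g (x i) := by
  have hb : {i ∈ s | x i ≠ a ∧ x i = b} = {i ∈ s | x i = b} :=
    filter_congr fun i _ => ⟨And.right, fun h => ⟨h ▸ hab.symm, h⟩⟩
  rw [← prod_filter_mul_prod_filter_not s (x · = a),
    ← prod_filter_mul_prod_filter_not {i ∈ s | x i ≠ a} (x · = b), filter_filter,
    filter_filter, hb, prod_eq_pow_card fun i hi => congrArg g (mem_filter.1 hi).2,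
    prod_eq_pow_card fun i hi => congrArg g (mem_filter.1 hi).2, mul_assoc]

theorem prod_swap_le_prod {ι α R : Type*} [DecidableEq α] [CommSemiring R] [PartialOrder R]
    [IsOrderedRing R] (s : Finset ι) (x : ι → α) {v : α → R} (hv : ∀ c, 0 ≤ v c) {a b : α}
    (hab : v b ≤ v a) (hcard : #{i ∈ s | x i = b} ≤ #{i ∈ s | x i = a}) :
    ∏ i ∈ s, v (Equiv.swap a b (x i)) ≤ ∏ i ∈ s, v (x i) := by
  rcases eq_or_ne a b with rfl | hne
  · simp
  have hrest : ∏ i ∈ s with x i ≠ a ∧ x i ≠ b, v (Equiv.swap a b (x i))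
      = ∏ i ∈ s with x i ≠ a ∧ x i ≠ b, v (x i) :=
    prod_congr rfl fun i hi => by
      rw [Equiv.swap_apply_of_ne_of_ne (mem_filter.1 hi).2.1 (mem_filter.1 hi).2.2]
  rw [prod_comp_eq_pow_mul_pow_mul s x (fun c => v (Equiv.swap a b c)) hne,
    prod_comp_eq_pow_mul_pow_mul s x v hne]
  simp only [Equiv.swap_apply_left, Equiv.swap_apply_right, hrest]
  rw [mul_comm (v b ^ _)]
  exact mul_le_mul_of_nonneg_right (pow_mul_pow_le_pow_mul_pow (hv b) hab hcard)
    (prod_nonneg fun i _ => hv _)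

theorem card_filter_eq_card_filter_erase_add {ι : Type*} [DecidableEq ι] {s : Finset ι} {m : ι}
    (hm : m ∈ s) (p : ι → Prop) [DecidablePred p] :
    #{i ∈ s | p i} = #{i ∈ s.erase m | p i} + if p m then 1 else 0 := by
  simp only [card_filter]
  exact (sum_erase_add _ _ hm).symm

section Sorting

variable {d : ℕ}

theorem exists_perm_antitone_comp (f : Fin d → ℝ) :
    ∃ σ : Equiv.Perm (Fin d), Antitone (f ∘ σ) :=
  ⟨Fin.revPerm.trans (Tuple.sort f), fun _ _ hij => by
    simpa using Tuple.monotone_sort f (Fin.rev_le_rev.2 hij)⟩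

theorem kMaxSum_comp_perm (σ : Equiv.Perm (Fin d)) (a : Fin d → ℝ) (k : ℕ) :
    kMaxSum (a ∘ σ) k = kMaxSum a k := by
  unfold kMaxSum
  congr 1
  ext r
  constructor
  · rintro ⟨s, hs, rfl⟩
    exact ⟨s.map σ.toEmbedding, by simpa using hs, by simp [sum_map]⟩
  · rintro ⟨s, hs, rfl⟩
    exact ⟨s.map σ.symm.toEmbedding, by simpa using hs, by simp [sum_map]⟩

theorem kMaxSum_succ_eq_sum_Iic {a : Fin d → ℝ} (ha : Antitone a) (k : Fin d) :
    kMaxSum a (k + 1) = ∑ i ≤ k, a i := by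
  refine IsGreatest.csSup_eq ⟨⟨Iic k, Fin.card_Iic k, rfl⟩, ?_⟩
  rintro _ ⟨s, hs, rfl⟩
  exact sum_le_sum_Iic_of_antitone ha k (hs.trans (Fin.card_Iic k).symm)

end Sorting

section Plurality

variable {q L : ℕ}

theorem card_filter_le_plur (x : Fin L → Fin q) (c : Fin q) : #{i | x i = c} ≤ plur x :=
  le_sup (f := fun a => #{i | x i = a}) (mem_univ c)

theorem plur_le {x : Fin L → Fin q} {n : ℕ} (h : ∀ c, #{i | x i = c} ≤ n) : plur x ≤ n :=
  Finset.sup_le fun c _ => h c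

theorem plur_perm_comp (σ : Equiv.Perm (Fin q)) (x : Fin L → Fin q) : plur (σ ∘ x) = plur x := by
  refine le_antisymm (plur_le fun c => ?_) (plur_le fun c => ?_)
  · simpa [← Equiv.eq_symm_apply] using card_filter_le_plur x (σ.symm c)
  · simpa using card_filter_le_plur (σ ∘ x) (σ c)

theorem fqL_comp_perm (σ : Equiv.Perm (Fin q)) (P : Fin q → ℝ) :
    fqL q L (P ∘ σ) = fqL q L P :=
  Fintype.sum_equiv (Equiv.arrowCongr (.refl _) σ) _ _ fun x => by
    rw [← plur_perm_comp σ x]; rfl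

def swapExcept (m : Fin L) (a b : Fin q) (x : Fin L → Fin q) : Fin L → Fin q :=
  update (Equiv.swap a b ∘ x) m (x m)

section swapExcept

variable {m : Fin L} {a b : Fin q} {x : Fin L → Fin q}

@[simp]
theorem swapExcept_apply_self : swapExcept m a b x m = x m := update_self ..

theorem swapExcept_apply_of_ne {i : Fin L} (hi : i ≠ m) :
    swapExcept m a b x i = Equiv.swap a b (x i) :=
  update_of_ne hi ..

theorem swapExcept_involutive : Involutive (swapExcept m a b) := fun x => funext fun i => by
  rcases eq_or_ne i m with rfl | hi
  · simp
  · simp [swapExcept_apply_of_ne hi]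

theorem card_filter_erase_swapExcept (c : Fin q) :
    #{i ∈ univ.erase m | swapExcept m a b x i = c}
      = #{i ∈ univ.erase m | x i = Equiv.swap a b c} :=
  congrArg card <| filter_congr fun i hi => by
    rw [swapExcept_apply_of_ne (ne_of_mem_erase hi), Equiv.swap_apply_eq_iff]

theorem prod_erase_swapExcept {R : Type*} [CommMonoid R] (v : Fin q → R) :
    ∏ j ∈ univ.erase m, v (swapExcept m a b x j)
      = ∏ j ∈ univ.erase m, v (Equiv.swap a b (x j)) :=
  prod_congr rfl fun j hj => by rw [swapExcept_apply_of_ne (ne_of_mem_erase hj)]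

theorem plur_swapExcept_le (hx : x m = a)
    (hcard : #{i ∈ univ.erase m | x i = b} ≤ #{i ∈ univ.erase m | x i = a}) :
    plur (swapExcept m a b x) ≤ plur x := by
  have hcount : ∀ (z : Fin L → Fin q) (c : Fin q),
      #{i | z i = c} = #{i ∈ univ.erase m | z i = c} + if z m = c then 1 else 0 :=
    fun z c => card_filter_eq_card_filter_erase_add (mem_univ m) _
  have hxa := card_filter_le_plur x a
  rw [hcount x a, if_pos hx] at hxa
  refine plur_le fun c => ?_
  rw [hcount, card_filter_erase_swapExcept, swapExcept_apply_self, hx]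
  by_cases hca : c = a
  · subst hca
    rw [Equiv.swap_apply_left, if_pos rfl]
    omega
  rw [if_neg (Ne.symm hca)]
  by_cases hcb : c = b
  · subst hcb
    rw [Equiv.swap_apply_right]
    omega
  · have hxc := card_filter_le_plur x c
    rw [hcount x c, hx, if_neg (Ne.symm hca)] at hxc
    rwa [Equiv.swap_apply_of_ne_of_ne hca hcb]

end swapExcept

end Plurality

section CondPlur

variable {q L : ℕ}

/-- `E[plur X | X m = a]` for `X` with i.i.d. coordinates of law `w`; summed over `m` it is
the partial derivative `∂ fqL / ∂ w a`. -/
noncomputable def condPlur (w : Fin q → ℝ) (m : Fin L) (a : Fin q) : ℝ :=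
  ∑ x : Fin L → Fin q with x m = a, (∏ j ∈ univ.erase m, w (x j)) * plur x

theorem condPlur_nonneg {w : Fin q → ℝ} (hw : 0 ≤ w) (m : Fin L) (a : Fin q) :
    0 ≤ condPlur w m a :=
  sum_nonneg fun _ _ => mul_nonneg (prod_nonneg fun _ _ => hw _) (Nat.cast_nonneg _)

theorem mul_sub_plur_swapExcept_nonneg {w : Fin q → ℝ} (hw : 0 ≤ w) {a b : Fin q}
    (hab : w b ≤ w a) {m : Fin L} {x : Fin L → Fin q} (hx : x m = a) :
    0 ≤ (∏ j ∈ univ.erase m, w (x j) - ∏ j ∈ univ.erase m, w (swapExcept m a b x j))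
      * ((plur x : ℝ) - plur (swapExcept m a b x)) := by
  rcases le_total #{i ∈ univ.erase m | x i = b} #{i ∈ univ.erase m | x i = a} with h | h
  · rw [prod_erase_swapExcept]
    exact mul_nonneg (sub_nonneg.2 (prod_swap_le_prod _ x hw hab h))
      (sub_nonneg.2 (by exact_mod_cast plur_swapExcept_le hx h))
  · -- `swapExcept m a b x` falls under the first case, its counts of `a` and `b` being swapped
    set y := swapExcept m a b x
    have hy : y m = a := by simpa [y] using hx
    have hy' : #{i ∈ univ.erase m | y i = b} ≤ #{i ∈ univ.erase m | y i = a} := by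
      simpa [y, card_filter_erase_swapExcept] using h
    have hprod := prod_swap_le_prod _ y hw hab hy'
    have hplur := plur_swapExcept_le hy hy'
    rw [← prod_erase_swapExcept, swapExcept_involutive x] at hprod
    rw [swapExcept_involutive x] at hplur
    exact mul_nonneg_of_nonpos_of_nonpos (sub_nonpos.2 hprod)
      (sub_nonpos.2 (by exact_mod_cast hplur))

theorem condPlur_le_condPlur {w : Fin q → ℝ} (hw : 0 ≤ w) {a b : Fin q} (hab : w b ≤ w a)
    (m : Fin L) : condPlur w m b ≤ condPlur w m a := by
  have hreindex : condPlur w m b = ∑ x : Fin L → Fin q with x m = a,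
      (∏ j ∈ univ.erase m, w (swapExcept m a b x j)) * plur x := by
    refine (sum_nbij' (Equiv.swap a b ∘ ·) (Equiv.swap a b ∘ ·) ?_ ?_ ?_ ?_ fun x _ => ?_).symm
    · intro x hx
      simp_all
    · intro x hx
      simp_all
    · exact fun x _ => funext fun i => Equiv.swap_apply_self a b (x i)
    · exact fun x _ => funext fun i => Equiv.swap_apply_self a b (x i)
    · rw [prod_erase_swapExcept, ← plur_perm_comp (Equiv.swap a b) x]
      rfl
  rw [hreindex, condPlur]
  refine sum_comp_mul_le_of_involutive (f := fun x => ∏ j ∈ univ.erase m, w (x j))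
    (g := fun x => (plur x : ℝ)) swapExcept_involutive (fun x hx => ?_)
    fun x hx => mul_sub_plur_swapExcept_nonneg hw hab (mem_filter.1 hx).2
  rw [mem_filter] at hx ⊢
  exact ⟨mem_univ _, by rw [swapExcept_apply_self, hx.2]⟩

theorem hasDerivAt_fqL_add_smul (v D : Fin q → ℝ) (t : ℝ) :
    HasDerivAt (fun s => fqL q L (v + s • D))
      (∑ a, D a * ∑ m : Fin L, condPlur (v + t • D) m a) t := by
  have hcoord : ∀ c, HasDerivAt (fun s => (v + s • D) c) (D c) t := fun c => by
    simpa using ((hasDerivAt_id t).smul_const (D c)).const_add (v c)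
  refine (HasDerivAt.fun_sum fun x _ =>
    (HasDerivAt.fun_finsetProd fun i _ => hcoord (x i)).mul_const (plur x : ℝ)).congr_deriv ?_
  simp only [condPlur, sum_filter, smul_eq_mul, mul_sum, sum_mul, mul_ite, mul_zero]
  conv_rhs => rw [sum_comm]; enter [2, m]; rw [sum_comm]
  simp only [sum_ite_eq, mem_univ, if_true]
  rw [sum_comm]
  exact sum_congr rfl fun x _ => sum_congr rfl fun m _ => by ring

end CondPlur

theorem le_of_sum_Iic_le_of_hasDerivAt {d : ℕ} {F : (Fin d → ℝ) → ℝ}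
    {G : (Fin d → ℝ) → Fin d → ℝ}
    (hF : ∀ v D (t : ℝ), HasDerivAt (fun s => F (v + s • D)) (∑ a, D a * G (v + t • D) a) t)
    (hG_nonneg : ∀ w, 0 ≤ w → Antitone w → 0 ≤ G w)
    (hG_anti : ∀ w, 0 ≤ w → Antitone w → Antitone (G w))
    {P Q : Fin d → ℝ} (hP : 0 ≤ P) (hQ : 0 ≤ Q) (hPa : Antitone P) (hQa : Antitone Q)
    (hPQ : ∀ k, ∑ i ≤ k, Q i ≤ ∑ i ≤ k, P i) : F Q ≤ F P := by
  have hseg : ∀ t ∈ Set.Icc (0 : ℝ) 1, 0 ≤ Q + t • (P - Q) ∧ Antitone (Q + t • (P - Q)) := by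
    rintro t ⟨ht0, ht1⟩
    refine ⟨fun i => ?_, fun i j hij => ?_⟩
    · have hPi : 0 ≤ P i := hP i
      have hQi : 0 ≤ Q i := hQ i
      simp only [Pi.add_apply, Pi.smul_apply, Pi.sub_apply, smul_eq_mul, Pi.zero_apply]
      nlinarith [mul_nonneg ht0 hPi, mul_nonneg (sub_nonneg.2 ht1) hQi]
    · simp only [Pi.add_apply, Pi.smul_apply, Pi.sub_apply, smul_eq_mul]
      nlinarith [mul_le_mul_of_nonneg_left (hPa hij) ht0,
        mul_le_mul_of_nonneg_left (hQa hij) (sub_nonneg.2 ht1)]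
  have hmono : MonotoneOn (fun t : ℝ => F (Q + t • (P - Q))) (Set.Icc 0 1) := by
    refine monotoneOn_of_hasDerivWithinAt_nonneg (convex_Icc 0 1)
      (fun t _ => (hF _ _ t).continuousAt.continuousWithinAt)
      (fun t _ => (hF _ _ t).hasDerivWithinAt) fun t ht => ?_
    obtain ⟨hw0, hwa⟩ := hseg t (interior_subset ht)
    refine sum_mul_nonneg_of_antitone_of_sum_Iic_nonneg (hG_anti _ hw0 hwa)
      (hG_nonneg _ hw0 hwa) fun k => ?_
    simpa [sum_sub_distrib] using hPQ k
  simpa using hmono (Set.left_mem_Icc.2 zero_le_one) (Set.right_mem_Icc.2 zero_le_one) zero_le_one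

theorem stmt3_general (q L : ℕ) (P Q : Fin q → ℝ)
    (hP : ∀ i, 0 ≤ P i)
    (hQ : ∀ i, 0 ≤ Q i)
    (hmaj : Majorizes P Q) :
    fqL q L Q ≤ fqL q L P := by
  obtain ⟨σ, hPσ⟩ := exists_perm_antitone_comp P
  obtain ⟨τ, hQτ⟩ := exists_perm_antitone_comp Q
  have hprefix : ∀ k, ∑ i ≤ k, (Q ∘ τ) i ≤ ∑ i ≤ k, (P ∘ σ) i := fun k => by
    rw [← kMaxSum_succ_eq_sum_Iic hQτ, ← kMaxSum_succ_eq_sum_Iic hPσ, kMaxSum_comp_perm,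
      kMaxSum_comp_perm]
    exact hmaj.1 _
  rw [← fqL_comp_perm τ Q, ← fqL_comp_perm σ P]
  exact le_of_sum_Iic_le_of_hasDerivAt hasDerivAt_fqL_add_smul
    (fun w hw _ a => sum_nonneg fun m _ => condPlur_nonneg hw m a)
    (fun w hw hwa a b hab => sum_le_sum fun m _ => condPlur_le_condPlur hw (hwa hab) m)
    (fun _ => hP _) (fun _ => hQ _) hPσ hQτ hprefix

theorem stmt3 (q L : ℕ) (hq : 2 ≤ q) (hL : 2 ≤ L) (P Q : Fin q → ℝ)
    (hP : ∀ i, 0 ≤ P i) (hPsum : ∑ i, P i = 1)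
    (hQ : ∀ i, 0 ≤ Q i) (hQsum : ∑ i, Q i = 1)
    (hmaj : Majorizes P Q) :
    fqL q L Q ≤ fqL q L P :=
  stmt3_general q L P Q hP hQ hmaj
end

section
/- Let q ≥ 2, L ≥ 2. The second derivative of g_{q,L}(w) = f_{q,L}(P_{q,w}) satisfies g_{q,L}''(w) = L(L−1)(w/(q−1))^{L−2} Σ_{a ∈ A_{q,L-2}} binom(L−2; a) ((q−1)(1−w)/w)^{a_q} G(a), where G(a) = (1/(q−1)^2) Σ_{i,j ∈ [q−1]} max{a+e_i+e_j} − (2/(q−1)) Σ_{i ∈ [q−1]} max{a+e_i+e_q} + max{a+2e_q}. -/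
open Finset

/-- The polynomial expression
`f_{q,L}(p) = Σ_{a ∈ A_{q,L}} binom(L; a) · max{a} · Π_i p_i^{a_i}`. -/
noncomputable def fqLpoly (q L : ℕ) (P : Fin q → ℝ) : ℝ :=
  ∑ a ∈ Finset.Nat.antidiagonalTuple q L,
    (Nat.multinomial Finset.univ a : ℝ) * ((Finset.univ.sup a : ℕ) : ℝ) *
      ∏ i, P i ^ a i

/-- The distribution `P_{q,w} = (w/(q−1), ..., w/(q−1), 1−w)`. -/
noncomputable def PqW (q : ℕ) (w : ℝ) : Fin q → ℝ :=
  fun i => if (i : ℕ) = q - 1 then 1 - w else w / ((q : ℝ) - 1)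

/-- The `i`-th standard basis vector of `ℤ^q` (valued in `ℕ`). -/
def stdb {q : ℕ} (j : Fin q) : Fin q → ℕ := fun i => if i = j then 1 else 0

/-- The quantity
`G(a) = (1/(q−1)^2) Σ_{i,j∈[q−1]} max{a+e_i+e_j} − (2/(q−1)) Σ_{i∈[q−1]} max{a+e_i+e_q}`
`        + max{a+2e_q}`. -/
noncomputable def Gfun (q : ℕ) (hq : 0 < q) (a : Fin q → ℕ) : ℝ :=
  let last : Fin q := ⟨q - 1, by omega⟩
  let lo : Finset (Fin q) := Finset.univ.filter fun i => (i : ℕ) < q - 1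
  (1 / ((q : ℝ) - 1) ^ 2) *
      ∑ i ∈ lo, ∑ j ∈ lo,
        ((Finset.univ.sup (fun t => a t + stdb i t + stdb j t) : ℕ) : ℝ)
    - (2 / ((q : ℝ) - 1)) *
      ∑ i ∈ lo,
        ((Finset.univ.sup (fun t => a t + stdb i t + stdb last t) : ℕ) : ℝ)
    + ((Finset.univ.sup (fun t => a t + 2 * stdb last t) : ℕ) : ℝ)

/-! Write `Σ_{b ∈ A_{q,n}} binom(n; b) h(b) p^b` for a general weight `h` (the theorem is about
`h = max`). Along a path `p(w)` with velocity `v`, the product rule and the identity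
`b_i · binom(n+1; b) = (n+1) · binom(n; b - e_i)` show that the derivative is `n+1` times the
sum of degree `n` with the shifted weight `a ↦ Σ_i v_i h(a + e_i)`. The path `w ↦ P_{q,w}` is
affine with velocity `(1/(q−1), …, 1/(q−1), −1)`, so two such steps give `L(L−1)` times the
degree-`(L−2)` sum whose weight is exactly `G`; finally, on `A_{q,L−2}` the monomial `P_{q,w}^a`
equals `(w/(q−1))^{L−2} ((q−1)(1−w)/w)^{a_q}`. -/

theorem Nat.succ_mul_multinomial_add_single {α : Type*} [Fintype α] [DecidableEq α]
    (a : α → ℕ) (i : α) :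
    (a i + 1) * Nat.multinomial univ (a + Pi.single i 1) =
      (∑ t, a t + 1) * Nat.multinomial univ a := by
  set b : α → ℕ := a + Pi.single i 1 with hb
  have hfact : ∏ t, (b t).factorial = (a i + 1) * ∏ t, (a t).factorial := by
    rw [Fintype.prod_eq_mul_prod_compl i,
      Fintype.prod_eq_mul_prod_compl i (fun t => (a t).factorial)]
    have hcompl : ∀ t ∈ ({i}ᶜ : Finset α), (b t).factorial = (a t).factorial :=
      fun t ht => by rw [hb, Pi.add_apply, Pi.single_eq_of_ne (by simpa using ht), add_zero]
    rw [prod_congr rfl hcompl, hb, Pi.add_apply, Pi.single_eq_same, Nat.factorial_succ,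
      mul_assoc]
  have hsum : ∑ t, b t = ∑ t, a t + 1 := by
    simp [hb, sum_add_distrib]
  apply Nat.eq_of_mul_eq_mul_left (Nat.prod_factorial_pos univ a)
  calc (∏ t, (a t).factorial) * ((a i + 1) * Nat.multinomial univ b)
      = (∏ t, (b t).factorial) * Nat.multinomial univ b := by rw [hfact]; ring
    _ = (∑ t, a t + 1).factorial := by rw [Nat.multinomial_spec, hsum]
    _ = (∏ t, (a t).factorial) * ((∑ t, a t + 1) * Nat.multinomial univ a) := by
        rw [Nat.factorial_succ, ← Nat.multinomial_spec]; ring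

theorem Finset.Nat.sum_antidiagonalTuple_succ_smul {M : Type*} [AddCommMonoid M] {k : ℕ}
    (n : ℕ) (i : Fin k) (F : (Fin k → ℕ) → M) :
    ∑ b ∈ antidiagonalTuple k (n + 1), b i • F b =
      ∑ a ∈ antidiagonalTuple k n, (a i + 1) • F (a + Pi.single i 1) := by
  have sum_add_single (a : Fin k → ℕ) : ∑ t, (a + Pi.single i 1 : Fin k → ℕ) t = ∑ t, a t + 1 := by
    simp [sum_add_distrib]
  have sub_add_single {b : Fin k → ℕ} (hb : b i ≠ 0) : b - Pi.single i 1 + Pi.single i 1 = b := by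
    ext t
    rcases eq_or_ne t i with rfl | ht
    · simp only [Pi.add_apply, Pi.sub_apply, Pi.single_eq_same]; omega
    · simp [ht]
  rw [← sum_filter_of_ne (p := fun b => b i ≠ 0) fun b _ hb hbi => hb (by rw [hbi, zero_smul])]
  symm
  refine sum_nbij' (· + Pi.single i 1) (· - Pi.single i 1) ?_ ?_ ?_ ?_ ?_
  · intro a ha
    simp only [mem_filter, mem_antidiagonalTuple] at ha ⊢
    exact ⟨by rw [sum_add_single, ha], by simp⟩
  · intro b hb
    simp only [mem_filter, mem_antidiagonalTuple] at hb ⊢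
    have := sum_add_single (b - Pi.single i 1)
    rw [sub_add_single hb.2, hb.1] at this
    omega
  · intro a _
    ext t
    simp
  · intro b hb
    exact sub_add_single (mem_filter.mp hb).2
  · intro a _
    simp

theorem hasDerivAt_prod_pow {ι : Type*} [Fintype ι] [DecidableEq ι] {p : ℝ → ι → ℝ}
    {v : ι → ℝ} {x : ℝ} (hp : ∀ i, HasDerivAt (fun y => p y i) (v i) x) (b : ι → ℕ) :
    HasDerivAt (fun y => ∏ i, p y i ^ b i)
      (∑ i, b i * v i * ∏ j, p x j ^ (b - Pi.single i 1 : ι → ℕ) j) x := by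
  refine (HasDerivAt.fun_finsetProd (u := univ) (f := fun i y => p y i ^ b i)
    (fun i _ => (hp i).pow (b i))).congr_deriv (sum_congr rfl fun i _ => ?_)
  have herase : ∀ j ∈ univ.erase i, p x j ^ (b - Pi.single i 1 : ι → ℕ) j = p x j ^ b j :=
    fun j hj => by simp [Pi.single_eq_of_ne (ne_of_mem_erase hj)]
  rw [← mul_prod_erase univ _ (mem_univ i), prod_congr rfl herase, smul_eq_mul]
  simp only [Pi.sub_apply, Pi.single_eq_same]
  ring

noncomputable def multinomialSum (k n : ℕ) (h : (Fin k → ℕ) → ℝ) (p : Fin k → ℝ) : ℝ :=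
  ∑ b ∈ Finset.Nat.antidiagonalTuple k n, (Nat.multinomial univ b : ℝ) * h b * ∏ i, p i ^ b i

noncomputable def shiftAlong {k : ℕ} (v : Fin k → ℝ) (h : (Fin k → ℕ) → ℝ) :
    (Fin k → ℕ) → ℝ :=
  fun a => ∑ i, v i * h (a + Pi.single i 1)

theorem hasDerivAt_multinomialSum_succ {k : ℕ} (n : ℕ) (h : (Fin k → ℕ) → ℝ)
    {p : ℝ → Fin k → ℝ} {v : Fin k → ℝ} {x : ℝ}
    (hp : ∀ i, HasDerivAt (fun y => p y i) (v i) x) :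
    HasDerivAt (fun y => multinomialSum k (n + 1) h (p y))
      ((n + 1) * multinomialSum k n (shiftAlong v h) (p x)) x := by
  refine (HasDerivAt.fun_sum fun b _ =>
    (hasDerivAt_prod_pow hp b).const_mul ((Nat.multinomial univ b : ℝ) * h b)).congr_deriv ?_
  have hcoeff : ∀ a ∈ Finset.Nat.antidiagonalTuple k n, ∀ i,
      ((a i + 1 : ℕ) : ℝ) * Nat.multinomial univ (a + Pi.single i 1) =
        (n + 1) * Nat.multinomial univ a := fun a ha i => by
    rw [Finset.Nat.mem_antidiagonalTuple] at ha
    exact_mod_cast ha ▸ Nat.succ_mul_multinomial_add_single a i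
  calc ∑ b ∈ Finset.Nat.antidiagonalTuple k (n + 1), (Nat.multinomial univ b : ℝ) * h b *
        ∑ i, b i * v i * ∏ j, p x j ^ (b - Pi.single i 1 : Fin k → ℕ) j
      = ∑ i, v i * ∑ b ∈ Finset.Nat.antidiagonalTuple k (n + 1),
          b i • ((Nat.multinomial univ b : ℝ) * h b *
            ∏ j, p x j ^ (b - Pi.single i 1 : Fin k → ℕ) j) := by
        simp only [mul_sum, nsmul_eq_mul]
        rw [sum_comm]
        exact sum_congr rfl fun i _ => sum_congr rfl fun b _ => by ring
    _ = ∑ i, v i * ∑ a ∈ Finset.Nat.antidiagonalTuple k n,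
          (n + 1) * ((Nat.multinomial univ a : ℝ) * h (a + Pi.single i 1) * ∏ j, p x j ^ a j) := by
        refine sum_congr rfl fun i _ => ?_
        rw [Finset.Nat.sum_antidiagonalTuple_succ_smul]
        refine congrArg _ (sum_congr rfl fun a ha => ?_)
        rw [nsmul_eq_mul, add_tsub_cancel_right, ← mul_assoc, ← mul_assoc, hcoeff a ha i]
        ring
    _ = (n + 1) * multinomialSum k n (shiftAlong v h) (p x) := by
        simp only [multinomialSum, shiftAlong, mul_sum, sum_mul]
        rw [sum_comm]
        exact sum_congr rfl fun a _ => sum_congr rfl fun i _ => by ring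

theorem deriv_deriv_multinomialSum {k : ℕ} (n : ℕ) (h : (Fin k → ℕ) → ℝ)
    {p : ℝ → Fin k → ℝ} {v : Fin k → ℝ} (hp : ∀ x i, HasDerivAt (fun y => p y i) (v i) x)
    (x : ℝ) :
    deriv (deriv fun y => multinomialSum k (n + 2) h (p y)) x =
      (n + 2) * (n + 1) * multinomialSum k n (shiftAlong v (shiftAlong v h)) (p x) := by
  have hderiv : deriv (fun y => multinomialSum k (n + 2) h (p y)) =
      fun y => (n + 1 + 1) * multinomialSum k (n + 1) (shiftAlong v h) (p y) :=
    funext fun y => by exact_mod_cast (hasDerivAt_multinomialSum_succ (n + 1) h (hp y)).deriv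
  rw [hderiv, ((hasDerivAt_multinomialSum_succ n _ (hp x)).const_mul _).deriv]
  ring

@[to_additive]
theorem Fin.prod_eq_prod_filter_lt_mul_last {M : Type*} [CommMonoid M] {q : ℕ} (hq : 0 < q)
    (f : Fin q → M) :
    ∏ i, f i =
      (∏ i ∈ univ.filter fun i : Fin q => (i : ℕ) < q - 1, f i) * f ⟨q - 1, by omega⟩ := by
  have hlast : univ.filter (fun i : Fin q => ¬ (i : ℕ) < q - 1) = {⟨q - 1, by omega⟩} := by
    ext i
    simp only [mem_filter, mem_univ, true_and, mem_singleton, Fin.ext_iff]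
    omega
  rw [← prod_filter_mul_prod_filter_not univ fun i : Fin q => (i : ℕ) < q - 1, hlast,
    prod_singleton]

noncomputable def PqWDeriv (q : ℕ) : Fin q → ℝ :=
  fun i => if (i : ℕ) = q - 1 then -1 else 1 / ((q : ℝ) - 1)

theorem hasDerivAt_PqW (q : ℕ) (x : ℝ) (i : Fin q) :
    HasDerivAt (fun w => PqW q w i) (PqWDeriv q i) x := by
  unfold PqW PqWDeriv
  split_ifs
  · simpa using (hasDerivAt_id x).const_sub 1
  · simpa using (hasDerivAt_id x).div_const ((q : ℝ) - 1)

theorem sum_PqWDeriv_mul {q : ℕ} (hq : 0 < q) (f : Fin q → ℝ) :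
    ∑ i, PqWDeriv q i * f i =
      1 / ((q : ℝ) - 1) * ∑ i ∈ univ.filter fun i : Fin q => (i : ℕ) < q - 1, f i
        - f ⟨q - 1, by omega⟩ := by
  rw [Fin.sum_eq_sum_filter_lt_add_last hq, mul_sum]
  have hlo : ∀ i ∈ univ.filter fun i : Fin q => (i : ℕ) < q - 1,
      PqWDeriv q i * f i = 1 / ((q : ℝ) - 1) * f i := fun i hi => by
    simp only [mem_filter] at hi
    simp [PqWDeriv, hi.2.ne]
  rw [sum_congr rfl hlo]
  simp [PqWDeriv, sub_eq_add_neg]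

theorem stdb_eq_single {q : ℕ} (j : Fin q) : stdb j = Pi.single j 1 := by
  ext i
  simp [stdb, Pi.single_apply]

theorem shiftAlong_shiftAlong_PqWDeriv_sup {q : ℕ} (hq : 0 < q) (a : Fin q → ℕ) :
    shiftAlong (PqWDeriv q) (shiftAlong (PqWDeriv q) fun b => ((univ.sup b : ℕ) : ℝ)) a =
      Gfun q hq a := by
  have hpair : ∀ i j : Fin q,
      (fun t => a t + stdb i t + stdb j t) = a + Pi.single i 1 + Pi.single j 1 := fun i j => by
    rw [stdb_eq_single, stdb_eq_single]; rfl
  have hdouble : (fun t => a t + 2 * stdb (⟨q - 1, by omega⟩ : Fin q) t) =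
      a + Pi.single ⟨q - 1, by omega⟩ 1 + Pi.single ⟨q - 1, by omega⟩ 1 := by
    ext t; simp [stdb_eq_single]; ring
  have hcomm : ∑ j ∈ univ.filter (fun i : Fin q => (i : ℕ) < q - 1),
      ((univ.sup (a + Pi.single ⟨q - 1, by omega⟩ 1 + Pi.single j 1) : ℕ) : ℝ) =
      ∑ j ∈ univ.filter (fun i : Fin q => (i : ℕ) < q - 1),
        ((univ.sup (a + Pi.single j 1 + Pi.single ⟨q - 1, by omega⟩ 1) : ℕ) : ℝ) :=
    sum_congr rfl fun j _ => by rw [add_right_comm]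
  simp only [shiftAlong, sum_PqWDeriv_mul hq, Gfun, hpair, hdouble, sum_sub_distrib, ← mul_sum]
  rw [hcomm, ← one_div_pow]
  ring

theorem prod_PqW_pow {q n : ℕ} (hq : 0 < q) {w : ℝ} (hr : (q : ℝ) - 1 ≠ 0) (hw : w ≠ 0)
    {a : Fin q → ℕ} (ha : ∑ i, a i = n) :
    ∏ i, PqW q w i ^ a i =
      (w / ((q : ℝ) - 1)) ^ n * (((q : ℝ) - 1) * (1 - w) / w) ^ a ⟨q - 1, by omega⟩ := by
  set k := a ⟨q - 1, by omega⟩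
  have hlo : ∀ i ∈ univ.filter fun i : Fin q => (i : ℕ) < q - 1,
      PqW q w i ^ a i = (w / ((q : ℝ) - 1)) ^ a i := fun i hi => by
    simp only [mem_filter] at hi
    simp [PqW, hi.2.ne]
  have hsum : ∑ i ∈ univ.filter (fun i : Fin q => (i : ℕ) < q - 1), a i + k = n := by
    rw [← ha, Fin.sum_eq_sum_filter_lt_add_last hq]
  rw [Fin.prod_eq_prod_filter_lt_mul_last hq, prod_congr rfl hlo, prod_pow_eq_pow_sum, ← hsum,
    pow_add, mul_assoc, ← mul_pow]
  simp only [PqW, if_true]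
  congr 2
  field_simp

theorem stmt7 (q L : ℕ) (hq : 2 ≤ q) (hL : 2 ≤ L) (w : ℝ) (hw0 : 0 < w) :
    deriv (deriv (fun w => fqLpoly q L (PqW q w))) w =
      (L : ℝ) * ((L : ℝ) - 1) * (w / ((q : ℝ) - 1)) ^ (L - 2) *
        ∑ a ∈ Finset.Nat.antidiagonalTuple q (L - 2),
          (Nat.multinomial Finset.univ a : ℝ) *
            (((q : ℝ) - 1) * (1 - w) / w) ^ (a ⟨q - 1, by omega⟩) *
            Gfun q (by omega) a := by
  obtain ⟨n, rfl⟩ : ∃ n, L = n + 2 := ⟨L - 2, by omega⟩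
  have hr : (q : ℝ) - 1 ≠ 0 := by
    have : (2 : ℝ) ≤ q := by exact_mod_cast hq
    linarith
  rw [Nat.add_sub_cancel]
  calc deriv (deriv fun w => fqLpoly q (n + 2) (PqW q w)) w
      = (n + 2) * (n + 1) * multinomialSum q n
          (shiftAlong (PqWDeriv q) (shiftAlong (PqWDeriv q) fun b => ((univ.sup b : ℕ) : ℝ)))
          (PqW q w) :=
        deriv_deriv_multinomialSum n _ (hasDerivAt_PqW q) w
    _ = _ := by
        simp only [multinomialSum, shiftAlong_shiftAlong_PqWDeriv_sup (by omega : 0 < q), mul_sum]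
        refine sum_congr rfl fun a ha => ?_
        rw [prod_PqW_pow (by omega) hr hw0.ne' (Finset.Nat.mem_antidiagonalTuple.mp ha)]
        push_cast
        ring
end

section
/- Let q ≥ 2 and a ∈ Z_{≥0}^q with a_1 ≥ a_2 ≥ ... ≥ a_{q−1}, and let r be the number of indices i ∈ [q] with a_i = max{a}. Define G(a) = (1/(q−1)^2) Σ_{i,j∈[q−1]} max{a+e_i+e_j} − (2/(q−1)) Σ_{i∈[q−1]} max{a+e_i+e_q} + max{a+2e_q}. If a_q < max{a} then G(a) ≥ −r(r−1)/(q−1)^2, and if a_q = max{a} then G(a) ≥ (2(r−1)(q−1) − (r−1)(r−2))/(q−1)^2. -/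
open Finset

/-! Write `M = max a`, `n = q - 1`, `c i = [a i = M]` and `S = ∑_{i < n} c i`.
Each `max{a + e_i + e_j}` is at least `M + max (c i) (c j)`, and at least `M + 2 c i` when
`i = j`; summing over `i, j < n` bounds the double sum below by `n² M + 2 n S - S² + S`.
The mixed terms satisfy `max{a + e_i + e_q} ≤ M + 1`, and even `≤ M + c i` when `a_q < M`,
while `max{a + 2 e_q}` is `M + 2` or at least `M` according as `a_q = M` or not.
Since `r = S + c q`, substituting these bounds gives both inequalities exactly. -/

section

variable {q : ℕ}

theorem sup_add_stdb_add_stdb (a : Fin q → ℕ) {i j : Fin q} (hij : i ≠ j) :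
    univ.sup (fun t => a t + stdb i t + stdb j t) = max (univ.sup a) (max (a i + 1) (a j + 1)) := by
  have ha : ∀ t, a t ≤ univ.sup a := fun t => le_sup (mem_univ t)
  apply le_antisymm
  · refine Finset.sup_le fun t _ => ?_
    have := ha t
    rcases eq_or_ne t i with rfl | hti
    · simp [stdb, hij]
    rcases eq_or_ne t j with rfl | htj
    · simp [stdb, hti]
    · simp [stdb, hti, htj, this]
  · refine max_le (sup_mono_fun fun t _ => by omega) (max_le ?_ ?_)
    · simpa [stdb, hij] using le_sup (f := fun t => a t + stdb i t + stdb j t) (mem_univ i)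
    · simpa [stdb, hij.symm] using le_sup (f := fun t => a t + stdb i t + stdb j t) (mem_univ j)

theorem sup_add_mul_stdb (a : Fin q → ℕ) (i : Fin q) (k : ℕ) :
    univ.sup (fun t => a t + k * stdb i t) = max (univ.sup a) (a i + k) := by
  have ha : ∀ t, a t ≤ univ.sup a := fun t => le_sup (mem_univ t)
  apply le_antisymm
  · refine Finset.sup_le fun t _ => ?_
    rcases eq_or_ne t i with rfl | hti
    · simp [stdb]
    · simp [stdb, hti, ha t]
  · refine max_le (sup_mono_fun fun t _ => by omega) ?_
    simpa [stdb] using le_sup (f := fun t => a t + k * stdb i t) (mem_univ i)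

noncomputable def maxInd (a : Fin q → ℕ) (i : Fin q) : ℝ := if a i = univ.sup a then 1 else 0

-- For 0/1-valued `c`, `c i + c j - c i * c j = max (c i) (c j)`.
theorem maxInd_add_maxInd_sub_mul_le_sup (a : Fin q → ℕ) (i j : Fin q) :
    ((univ.sup a : ℕ) : ℝ)
        + (maxInd a i + maxInd a j - maxInd a i * maxInd a j + if i = j then maxInd a i else 0)
      ≤ (univ.sup (fun t => a t + stdb i t + stdb j t) : ℕ) := by
  rcases eq_or_ne i j with rfl | hij
  · have h := sup_add_mul_stdb a i 2
    simp only [two_mul, ← add_assoc] at h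
    rw [h, if_pos rfl]
    unfold maxInd
    split_ifs <;> push_cast [*] <;> norm_num
  · rw [sup_add_stdb_add_stdb a hij, if_neg hij]
    unfold maxInd
    split_ifs <;> push_cast [*] <;> norm_num

theorem sup_add_stdb_add_stdb_le {a : Fin q → ℕ} {i j : Fin q} (hij : i ≠ j) :
    univ.sup (fun t => a t + stdb i t + stdb j t) ≤ univ.sup a + 1 := by
  have ha : ∀ t, a t ≤ univ.sup a := fun t => le_sup (mem_univ t)
  rw [sup_add_stdb_add_stdb a hij]
  have := ha i; have := ha j
  omega

theorem sup_add_stdb_add_stdb_le_of_lt {a : Fin q → ℕ} {i j : Fin q} (hij : i ≠ j)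
    (hj : a j < univ.sup a) :
    ((univ.sup (fun t => a t + stdb i t + stdb j t) : ℕ) : ℝ) ≤ (univ.sup a : ℕ) + maxInd a i := by
  have hi : a i ≤ univ.sup a := le_sup (mem_univ i)
  rw [sup_add_stdb_add_stdb a hij]
  unfold maxInd
  split_ifs with h
  · exact_mod_cast (by omega : max (univ.sup a) (max (a i + 1) (a j + 1)) ≤ univ.sup a + 1)
  · rw [add_zero, Nat.cast_le]
    omega

theorem sum_sum_add_sub_mul_add_ite_eq {ι R : Type*} [DecidableEq ι] [CommRing R]
    (s : Finset ι) (m : R) (c : ι → R) :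
    ∑ i ∈ s, ∑ j ∈ s, (m + (c i + c j - c i * c j + if i = j then c i else 0))
      = #s ^ 2 * m + 2 * #s * ∑ i ∈ s, c i - (∑ i ∈ s, c i) ^ 2 + ∑ i ∈ s, c i := by
  simp only [sum_add_distrib, sum_const, nsmul_eq_mul, sum_sub_distrib, ← mul_sum, sum_ite_eq,
    ← sum_mul, sum_ite_mem, inter_self, sq]
  ring

def initIdx (q : ℕ) : Finset (Fin q) := univ.filter fun i => (i : ℕ) < q - 1

def lastIdx (hq : 0 < q) : Fin q := ⟨q - 1, by omega⟩

theorem lastIdx_notMem_initIdx (hq : 0 < q) : lastIdx hq ∉ initIdx q := by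
  simp [initIdx, lastIdx]

theorem univ_eq_insert_lastIdx (hq : 0 < q) :
    (univ : Finset (Fin q)) = insert (lastIdx hq) (initIdx q) := by
  ext i
  simp only [initIdx, lastIdx, mem_insert, mem_filter, mem_univ, true_and, true_iff, Fin.ext_iff]
  omega

theorem natCast_card_initIdx (hq : 0 < q) : (#(initIdx q) : ℝ) = q - 1 := by
  have h := card_univ (α := Fin q)
  rw [univ_eq_insert_lastIdx hq, card_insert_of_notMem (lastIdx_notMem_initIdx hq),
    Fintype.card_fin] at h
  rw [show #(initIdx q) = q - 1 by omega, Nat.cast_sub hq, Nat.cast_one]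

theorem Gfun_eq (hq : 0 < q) (a : Fin q → ℕ) :
    Gfun q hq a = (1 / ((q : ℝ) - 1) ^ 2) *
        ∑ i ∈ initIdx q, ∑ j ∈ initIdx q,
          ((univ.sup (fun t => a t + stdb i t + stdb j t) : ℕ) : ℝ)
      - (2 / ((q : ℝ) - 1)) *
        ∑ i ∈ initIdx q, ((univ.sup (fun t => a t + stdb i t + stdb (lastIdx hq) t) : ℕ) : ℝ)
      + ((univ.sup (fun t => a t + 2 * stdb (lastIdx hq) t) : ℕ) : ℝ) :=
  rfl

theorem natCast_card_filter_eq_sup (hq : 0 < q) (a : Fin q → ℕ) :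
    (#(univ.filter fun i => a i = univ.sup a) : ℝ)
      = ∑ i ∈ initIdx q, maxInd a i + maxInd a (lastIdx hq) := by
  rw [natCast_card_filter, add_comm, ← sum_insert (lastIdx_notMem_initIdx hq),
    ← univ_eq_insert_lastIdx hq]
  rfl

theorem sum_sum_sup_add_stdb_add_stdb_ge (a : Fin q → ℕ) (s : Finset (Fin q)) :
    (#s : ℝ) ^ 2 * (univ.sup a : ℕ) + 2 * #s * ∑ i ∈ s, maxInd a i - (∑ i ∈ s, maxInd a i) ^ 2
        + ∑ i ∈ s, maxInd a i
      ≤ ∑ i ∈ s, ∑ j ∈ s, ((univ.sup (fun t => a t + stdb i t + stdb j t) : ℕ) : ℝ) := by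
  rw [← sum_sum_add_sub_mul_add_ite_eq]
  exact sum_le_sum fun i _ => sum_le_sum fun j _ => maxInd_add_maxInd_sub_mul_le_sup a i j

theorem sum_sup_add_stdb_add_stdb_le {a : Fin q → ℕ} {s : Finset (Fin q)} {j : Fin q} (hj : j ∉ s) :
    ∑ i ∈ s, ((univ.sup (fun t => a t + stdb i t + stdb j t) : ℕ) : ℝ)
      ≤ #s * (((univ.sup a : ℕ) : ℝ) + 1) := by
  rw [← nsmul_eq_mul, ← sum_const]
  exact sum_le_sum fun i hi => by
    exact_mod_cast sup_add_stdb_add_stdb_le (ne_of_mem_of_not_mem hi hj)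

theorem sum_sup_add_stdb_add_stdb_le_of_lt {a : Fin q → ℕ} {s : Finset (Fin q)} {j : Fin q}
    (hj : j ∉ s) (hlt : a j < univ.sup a) :
    ∑ i ∈ s, ((univ.sup (fun t => a t + stdb i t + stdb j t) : ℕ) : ℝ)
      ≤ #s * ((univ.sup a : ℕ) : ℝ) + ∑ i ∈ s, maxInd a i := by
  rw [← nsmul_eq_mul, ← sum_const, ← sum_add_distrib]
  exact sum_le_sum fun i hi => sup_add_stdb_add_stdb_le_of_lt (ne_of_mem_of_not_mem hi hj) hlt

theorem le_Gfun (hq : 0 < q) (a : Fin q → ℕ) {mid last : ℝ}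
    (hmid : ∑ i ∈ initIdx q, ((univ.sup (fun t => a t + stdb i t + stdb (lastIdx hq) t)
      : ℕ) : ℝ) ≤ mid)
    (hlast : last ≤ ((univ.sup (fun t => a t + 2 * stdb (lastIdx hq) t) : ℕ) : ℝ)) :
    1 / ((q : ℝ) - 1) ^ 2 * (((q : ℝ) - 1) ^ 2 * (univ.sup a : ℕ)
        + 2 * ((q : ℝ) - 1) * ∑ i ∈ initIdx q, maxInd a i - (∑ i ∈ initIdx q, maxInd a i) ^ 2
        + ∑ i ∈ initIdx q, maxInd a i)
      - 2 / ((q : ℝ) - 1) * mid + last ≤ Gfun q hq a := by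
  have hF := sum_sum_sup_add_stdb_add_stdb_ge a (initIdx q)
  rw [natCast_card_initIdx hq] at hF
  have hn : (0 : ℝ) ≤ (q : ℝ) - 1 := by
    rw [sub_nonneg, Nat.one_le_cast]
    exact hq
  rw [Gfun_eq]
  gcongr

end

theorem stmt8 (q : ℕ) (hq : 2 ≤ q) (a : Fin q → ℕ) :
    let r : ℝ := ((Finset.univ.filter fun i => a i = Finset.univ.sup a).card : ℝ)
    (a ⟨q - 1, by omega⟩ < Finset.univ.sup a →
      -(r * (r - 1)) / ((q : ℝ) - 1) ^ 2 ≤ Gfun q (by omega) a) ∧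
    (a ⟨q - 1, by omega⟩ = Finset.univ.sup a →
      (2 * (r - 1) * ((q : ℝ) - 1) - (r - 1) * (r - 2)) / ((q : ℝ) - 1) ^ 2 ≤
        Gfun q (by omega) a) := by
  intro r
  have hq₀ : 0 < q := by omega
  have hr : r = ∑ i ∈ initIdx q, maxInd a i + maxInd a (lastIdx hq₀) :=
    natCast_card_filter_eq_sup hq₀ a
  have hn : (q : ℝ) - 1 ≠ 0 := by
    rw [sub_ne_zero, Ne, Nat.cast_eq_one]
    omega
  have hLast := sup_add_mul_stdb a (lastIdx hq₀) 2
  have hnotMem := lastIdx_notMem_initIdx hq₀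
  refine ⟨fun (hlt : a (lastIdx hq₀) < _) => ?_, fun (heq : a (lastIdx hq₀) = _) => ?_⟩
  · have hG := le_Gfun hq₀ a (sum_sup_add_stdb_add_stdb_le_of_lt hnotMem hlt)
      (last := (univ.sup a : ℕ)) (by rw [hLast]; exact_mod_cast le_max_left _ _)
    rw [natCast_card_initIdx hq₀] at hG
    rw [hr, maxInd, if_neg hlt.ne]
    convert hG using 1
    field_simp
    ring
  · have hG := le_Gfun hq₀ a (sum_sup_add_stdb_add_stdb_le hnotMem)
      (last := (univ.sup a : ℕ) + 2) (by rw [hLast, ← heq]; push_cast; simp)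
    rw [natCast_card_initIdx hq₀] at hG
    rw [hr, maxInd, if_pos heq]
    convert hG using 1
    field_simp
    ring
end

section
/- Covering lemma for list-recovery balls: for q ≥ 2, 1 ≤ ℓ ≤ q−1, w ∈ (0,1) with nw an integer and 1 ≤ nw ≤ n−1, there exist K tuples of input lists Y^{(1)},...,Y^{(K)} ∈ (ℓ-subsets of [q])^n whose list-recovery balls of radius nw cover [q]^n, with K ≤ n·ln(q)·√(8nw(1−w))·q^{n(1 − H_{q,ℓ}(w))} + 1. -/
/-!
Draw `K` tuples of input lists independently and uniformly from `(ℓ-subsets of [q])ⁿ`. A fixed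
word `x` lies within list-recovery distance `m = nw` of a random tuple with probability at least
`p = C(n,m) ((q-ℓ)/q)^m (ℓ/q)^(n-m)`, so by the union bound over the `qⁿ` words some choice of
`K = ⌊n ln q / p⌋ + 1` tuples covers everything, because `qⁿ (1-p)^K ≤ qⁿ e^{-pK} < 1`. Finally
`1/p ≤ √(8nw(1-w)) q^{n(1-H_{q,ℓ}(w))}`: the power of `q` is exactly the ratio between
`w^m (1-w)^(n-m)` and `((q-ℓ)/q)^m (ℓ/q)^(n-m)`, and `C(n,m) w^m (1-w)^(n-m) ≥ 1/√(8nw(1-w))`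
follows from Stirling's formula in the form `s a * s b ≤ 2 s (a+b)` for the Stirling sequence `s`.
-/

open Finset

/-- The list-recovery entropy
`H_{q,ℓ}(w) = w log_q((q−ℓ)/w) + (1−w) log_q(ℓ/(1−w))`. -/
noncomputable def Hql (q ℓ : ℕ) (w : ℝ) : ℝ :=
  w * Real.logb q (((q : ℝ) - ℓ) / w) + (1 - w) * Real.logb q ((ℓ : ℝ) / (1 - w))

open Real

namespace Stirling

open scoped Nat

theorem stirlingSeq_two : stirlingSeq 2 = exp 1 ^ 2 / 4 := by
  have : √(2 * 2 : ℝ) = 2 := by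
    rw [show (2 * 2 : ℝ) = 2 ^ 2 by norm_num, sqrt_sq zero_le_two]
  simp [stirlingSeq, this]
  field_simp
  rw [← exp_nat_mul]
  norm_num
  ring

theorem factorial_mul_exp_pow {k : ℕ} (hk : k ≠ 0) :
    (k ! : ℝ) * exp 1 ^ k = stirlingSeq k * √(2 * k) * k ^ k := by
  rw [stirlingSeq, div_pow]
  field_simp

theorem stirlingSeq_pos {k : ℕ} (hk : k ≠ 0) : 0 < stirlingSeq k := by
  obtain ⟨j, rfl⟩ := Nat.exists_eq_succ_of_ne_zero hk
  exact stirlingSeq'_pos j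

theorem stirlingSeq_le_stirlingSeq {j k : ℕ} (hj : j ≠ 0) (hjk : j ≤ k) :
    stirlingSeq k ≤ stirlingSeq j := by
  obtain ⟨i, rfl⟩ := Nat.exists_eq_succ_of_ne_zero hj
  obtain ⟨l, rfl⟩ := Nat.exists_eq_succ_of_ne_zero (by omega : k ≠ 0)
  exact stirlingSeq'_antitone (by omega : i ≤ l)

theorem stirlingSeq_one_mul_le {b : ℕ} (hb : b ≠ 0) :
    stirlingSeq 1 * stirlingSeq b ≤ 2 * stirlingSeq (1 + b) := by
  rcases eq_or_ne b 1 with rfl | hb1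
  · rw [stirlingSeq_one, stirlingSeq_two]
    field_simp
    rw [sq_sqrt zero_le_two]
    norm_num
  -- Robbins: `s b ≤ e^{1/72} s (b+1)` for `b ≥ 2`, and `s 1 · e^{1/72} = e^{73/72} / √2 ≤ 2`.
  have hb2 : (2 : ℝ) ≤ b := by norm_cast; omega
  have hrobbins : log (stirlingSeq b) ≤ log (stirlingSeq (b + 1)) + 1 / 72 := by
    have : 1 / (12 * b * (b + 1) : ℝ) ≤ 1 / 72 := by
      gcongr
      nlinarith
    linarith [log_stirlingSeq_sdiff_le b]
  have hone : log (stirlingSeq 1) + 1 / 72 ≤ log 2 := by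
    rw [stirlingSeq_one, log_div (by positivity) (by positivity), log_exp, log_sqrt zero_le_two]
    linarith [log_two_gt_d9]
  have hs1 := stirlingSeq_pos one_ne_zero
  have hsb := stirlingSeq_pos hb
  have hsb1 := stirlingSeq_pos (Nat.succ_ne_zero b)
  rw [add_comm 1 b, ← log_le_log_iff (by positivity) (by positivity), log_mul hs1.ne' hsb.ne',
    log_mul two_ne_zero hsb1.ne']
  linarith

theorem stirlingSeq_two_sq_le : stirlingSeq 2 ^ 2 ≤ 2 * √π := by
  have hpi : (1.73 : ℝ) ≤ √π := le_sqrt_of_sq_le (by linarith [pi_gt_three])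
  have he : exp 1 ^ 4 ≤ 2.7182818286 ^ 4 := by gcongr; exact exp_one_lt_d9.le
  rw [stirlingSeq_two]
  nlinarith

/-- The constant `2` is attained at `a = b = 1`. -/
theorem stirlingSeq_mul_stirlingSeq_le {a b : ℕ} (ha : a ≠ 0) (hb : b ≠ 0) :
    stirlingSeq a * stirlingSeq b ≤ 2 * stirlingSeq (a + b) := by
  wlog hab : a ≤ b generalizing a b
  · rw [mul_comm, add_comm]
    exact this hb ha (by omega)
  rcases eq_or_ne a 1 with rfl | ha1
  · exact stirlingSeq_one_mul_le hb
  calc stirlingSeq a * stirlingSeq b ≤ stirlingSeq 2 ^ 2 := by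
        rw [sq]
        gcongr
        · exact (stirlingSeq_pos hb).le
        · exact (stirlingSeq_pos two_ne_zero).le
        · exact stirlingSeq_le_stirlingSeq two_ne_zero (by omega)
        · exact stirlingSeq_le_stirlingSeq two_ne_zero (by omega)
    _ ≤ 2 * √π := stirlingSeq_two_sq_le
    _ ≤ 2 * stirlingSeq (a + b) := by gcongr; exact sqrt_pi_le_stirlingSeq (by omega)

end Stirling

open Stirling in
theorem one_le_sqrt_mul_choose_mul_pow_mul_pow {m n : ℕ} (hm : m ≠ 0) (hmn : m < n) :
    1 ≤ √(8 * n * ((m : ℝ) / n) * (1 - (m : ℝ) / n)) * n.choose m *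
      ((m : ℝ) / n) ^ m * (1 - (m : ℝ) / n) ^ (n - m) := by
  obtain ⟨b, rfl⟩ : ∃ b, n = m + b := ⟨n - m, by omega⟩
  have hb : b ≠ 0 := by omega
  have hfact : ((m + b).choose m : ℝ) * (stirlingSeq m * √(2 * m) * m ^ m) *
      (stirlingSeq b * √(2 * b) * b ^ b) =
      stirlingSeq (m + b) * √(2 * (m + b : ℕ)) * (m + b : ℕ) ^ (m + b) := by
    have h := Nat.choose_mul_factorial_mul_factorial (Nat.le_add_right m b)
    rw [Nat.add_sub_cancel_left] at h
    rw [← factorial_mul_exp_pow hm, ← factorial_mul_exp_pow hb,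
      ← factorial_mul_exp_pow (by omega), ← h]
    push_cast
    ring
  rw [Nat.add_sub_cancel_left]
  push_cast at hfact ⊢
  have hbn : 1 - (m : ℝ) / (m + b) = b / (m + b) := by
    field_simp
    ring
  have hsqrt : √(8 * (m + b) * ((m : ℝ) / (m + b)) * (b / (m + b))) =
      2 * (√(2 * m) * √(2 * b)) / √(2 * (m + b)) := by
    rw [show 8 * (m + b) * ((m : ℝ) / (m + b)) * (b / (m + b)) =
        2 ^ 2 * (2 * m) * (2 * b) / (2 * (m + b)) by field_simp; ring,
      sqrt_div' _ (by positivity), sqrt_mul (by positivity), sqrt_mul (by positivity),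
      sqrt_sq zero_le_two, mul_assoc]
  have hsm := stirlingSeq_pos hm
  have hsb := stirlingSeq_pos hb
  -- With `k! = s k √(2k) (k/e)^k`, the right-hand side is exactly `2 s (m+b) / (s m s b)`.
  calc (1 : ℝ) ≤ 2 * stirlingSeq (m + b) / (stirlingSeq m * stirlingSeq b) := by
        rw [le_div_iff₀ (by positivity), one_mul]
        exact stirlingSeq_mul_stirlingSeq_le hm hb
    _ = _ := by
        rw [hbn, hsqrt]
        simp only [div_pow]
        field_simp
        linear_combination -hfact

namespace Finset

variable {Ω X : Type*} [Fintype X] [DecidableEq Ω]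

theorem exists_forall_exists_of_sum_card_pow_lt (A : Finset Ω) (P : X → Ω → Prop)
    [∀ x, DecidablePred (P x)] (K : ℕ) (h : ∑ x, #{ω ∈ A | ¬P x ω} ^ K < #A ^ K) :
    ∃ f : Fin K → Ω, (∀ k, f k ∈ A) ∧ ∀ x, ∃ k, P x (f k) := by
  classical
  set bad := univ.biUnion fun x => Fintype.piFinset fun _ : Fin K => {ω ∈ A | ¬P x ω}
  have hcard : #bad < #(Fintype.piFinset fun _ : Fin K => A) := by
    refine card_biUnion_le.trans_lt ?_
    simpa using h
  obtain ⟨f, hfA, hfbad⟩ := exists_mem_notMem_of_card_lt_card hcard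
  rw [Fintype.mem_piFinset] at hfA
  refine ⟨f, hfA, fun x => ?_⟩
  by_contra! hx
  exact hfbad (mem_biUnion.2
    ⟨x, mem_univ x, Fintype.mem_piFinset.2 fun k => mem_filter.2 ⟨hfA k, hx k⟩⟩)

theorem exists_cover_of_mul_card_le_card_filter [Nonempty X] (A : Finset Ω)
    (P : X → Ω → Prop) [∀ x, DecidablePred (P x)] {p : ℝ} (hp : 0 < p) (hA : A.Nonempty)
    (hP : ∀ x, p * #A ≤ #{ω ∈ A | P x ω}) :
    ∃ (K : ℕ) (f : Fin K → Ω), (∀ k, f k ∈ A) ∧ (∀ x, ∃ k, P x (f k)) ∧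
      (K : ℝ) ≤ log (Fintype.card X) / p + 1 := by
  set K := ⌊log (Fintype.card X) / p⌋₊ + 1
  have hK : log (Fintype.card X) < p * K := by
    rw [← div_lt_iff₀' hp]
    exact_mod_cast Nat.lt_floor_add_one (log (Fintype.card X) / p)
  have hbad (x : X) : (#{ω ∈ A | ¬P x ω} : ℝ) ≤ exp (-p) * #A := by
    have hsplit : (#{ω ∈ A | P x ω} : ℝ) + #{ω ∈ A | ¬P x ω} = #A := by
      exact_mod_cast card_filter_add_card_filter_not (P x)
    calc (#{ω ∈ A | ¬P x ω} : ℝ) ≤ (1 - p) * #A := by linarith [hP x]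
      _ ≤ exp (-p) * #A := by gcongr; linarith [add_one_le_exp (-p)]
  have hX : (Fintype.card X : ℝ) * exp (-(p * K)) < 1 := by
    have hXpos : (0 : ℝ) < Fintype.card X := by exact_mod_cast Fintype.card_pos
    rw [← lt_div_iff₀' hXpos, one_div, ← exp_log hXpos, ← exp_neg]
    exact exp_lt_exp.2 (neg_lt_neg hK)
  have hApos : (0 : ℝ) < #A ^ K := by have := hA.card_pos; positivity
  have hunion : (∑ x, #{ω ∈ A | ¬P x ω} ^ K : ℝ) < #A ^ K :=
    calc (∑ x, #{ω ∈ A | ¬P x ω} ^ K : ℝ) ≤ ∑ _x : X, (exp (-p) * #A) ^ K := by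
          gcongr with x; exact hbad x
      _ = Fintype.card X * exp (-(p * K)) * #A ^ K := by
          rw [sum_const, card_univ, nsmul_eq_mul, mul_pow, ← exp_nat_mul]; ring_nf
      _ < #A ^ K := by nlinarith
  obtain ⟨f, hfA, hf⟩ := exists_forall_exists_of_sum_card_pow_lt A P K (by exact_mod_cast hunion)
  refine ⟨K, f, hfA, hf, ?_⟩
  push_cast [K]
  gcongr
  exact Nat.floor_le (div_nonneg (log_natCast_nonneg _) hp.le)

end Finset

section ListRecovery

variable {ι α : Type*} [Fintype ι] [DecidableEq ι] [Fintype α] [DecidableEq α]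

theorem card_filter_notMem_powersetCard_mul (ℓ : ℕ) (a : α) :
    #{s ∈ powersetCard ℓ (univ : Finset α) | a ∉ s} * Fintype.card α =
      (Fintype.card α).choose ℓ * (Fintype.card α - ℓ) := by
  obtain ⟨q, hq⟩ := Nat.exists_eq_succ_of_ne_zero (Fintype.card_pos_iff.2 ⟨a⟩).ne'
  have : {s ∈ powersetCard ℓ (univ : Finset α) | a ∉ s} = powersetCard ℓ (univ.erase a) := by
    ext s
    simp [subset_erase, and_comm]
  rw [this, card_powersetCard, card_erase_of_mem (mem_univ a), card_univ, hq, Nat.succ_sub_one,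
    Nat.choose_mul_succ_eq]

theorem card_filter_mem_powersetCard_mul (ℓ : ℕ) (a : α) :
    #{s ∈ powersetCard ℓ (univ : Finset α) | a ∈ s} * Fintype.card α =
      (Fintype.card α).choose ℓ * ℓ := by
  have hsplit := card_filter_add_card_filter_not (s := powersetCard ℓ (univ : Finset α)) (a ∈ ·)
  have havoid := card_filter_notMem_powersetCard_mul ℓ a
  rw [card_powersetCard, card_univ] at hsplit
  rcases le_or_gt ℓ (Fintype.card α) with hℓ | hℓ
  · apply Nat.add_right_cancel (m := (Fintype.card α).choose ℓ * (Fintype.card α - ℓ))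
    rw [← mul_add, Nat.add_sub_cancel' hℓ, ← havoid, ← add_mul, hsplit]
  · have : powersetCard ℓ (univ : Finset α) = ∅ := powersetCard_eq_empty.2 (by simpa using hℓ)
    simp [this, Nat.choose_eq_zero_of_lt hℓ]

def lrErrors (x : ι → α) (Y : ι → Finset α) : Finset ι := {i | x i ∉ Y i}

def lrDist (x : ι → α) (Y : ι → Finset α) : ℕ := #(lrErrors x Y)

variable (ι α) in
def inputListTuples (ℓ : ℕ) : Finset (ι → Finset α) :=
  Fintype.piFinset fun _ => powersetCard ℓ univ

omit [DecidableEq α] in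
theorem card_inputListTuples (ℓ : ℕ) :
    #(inputListTuples ι α ℓ) = (Fintype.card α).choose ℓ ^ Fintype.card ι := by
  simp [inputListTuples]

theorem card_filter_lrErrors_eq_mul (ℓ : ℕ) (x : ι → α) (T : Finset ι) :
    #{Y ∈ inputListTuples ι α ℓ | lrErrors x Y = T} * Fintype.card α ^ Fintype.card ι =
      #(inputListTuples ι α ℓ) * (Fintype.card α - ℓ) ^ #T * ℓ ^ (Fintype.card ι - #T) := by
  have hfiber : {Y ∈ inputListTuples ι α ℓ | lrErrors x Y = T} =
      Fintype.piFinset fun i => {s ∈ powersetCard ℓ univ | x i ∉ s ↔ i ∈ T} := by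
    ext Y
    simp [inputListTuples, lrErrors, Finset.ext_iff, forall_and]
  have hcoord (i : ι) :
      #{s ∈ powersetCard ℓ (univ : Finset α) | x i ∉ s ↔ i ∈ T} * Fintype.card α =
        (Fintype.card α).choose ℓ * if i ∈ T then Fintype.card α - ℓ else ℓ := by
    by_cases hi : i ∈ T
    · simpa [hi] using card_filter_notMem_powersetCard_mul ℓ (x i)
    · simpa [hi] using card_filter_mem_powersetCard_mul ℓ (x i)
  rw [hfiber, Fintype.card_piFinset, ← card_univ (α := ι), prod_mul_pow_card,
    prod_congr rfl fun i _ => hcoord i, prod_mul_distrib, prod_const, card_univ,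
    card_inputListTuples, prod_ite, prod_const, prod_const, filter_mem_eq_inter, univ_inter,
    filter_not, filter_mem_eq_inter, univ_inter, card_sdiff, card_univ, inter_univ, mul_assoc]

theorem card_filter_lrDist_eq_mul (ℓ m : ℕ) (x : ι → α) :
    #{Y ∈ inputListTuples ι α ℓ | lrDist x Y = m} * Fintype.card α ^ Fintype.card ι =
      (Fintype.card ι).choose m * #(inputListTuples ι α ℓ) * (Fintype.card α - ℓ) ^ m *
        ℓ ^ (Fintype.card ι - m) := by
  have hmaps : ∀ Y ∈ {Y ∈ inputListTuples ι α ℓ | lrDist x Y = m},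
      lrErrors x Y ∈ powersetCard m (univ : Finset ι) :=
    fun Y hY => mem_powersetCard.2 ⟨subset_univ _, (mem_filter.1 hY).2⟩
  have hfiber (T : Finset ι) (hT : T ∈ powersetCard m univ) :
      #{Y ∈ {Y ∈ inputListTuples ι α ℓ | lrDist x Y = m} | lrErrors x Y = T} *
        Fintype.card α ^ Fintype.card ι =
      #(inputListTuples ι α ℓ) * (Fintype.card α - ℓ) ^ m * ℓ ^ (Fintype.card ι - m) := by
    obtain ⟨-, hTm⟩ := mem_powersetCard.1 hT
    rw [filter_filter, ← hTm, ← card_filter_lrErrors_eq_mul]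
    congr 3
    ext Y
    exact ⟨fun h => h.2, fun h => ⟨by rw [lrDist, h], h⟩⟩
  rw [card_eq_sum_card_fiberwise hmaps, sum_mul, sum_congr rfl hfiber, sum_const,
    card_powersetCard, card_univ, smul_eq_mul, mul_assoc, mul_assoc, mul_assoc]

theorem mul_card_le_card_filter_lrDist_le [Nonempty α] {ℓ m : ℕ} (hℓ : ℓ ≤ Fintype.card α)
    (hm : m ≤ Fintype.card ι) (x : ι → α) :
    (Fintype.card ι).choose m * (((Fintype.card α : ℝ) - ℓ) / Fintype.card α) ^ m *
        ((ℓ : ℝ) / Fintype.card α) ^ (Fintype.card ι - m) * #(inputListTuples ι α ℓ) ≤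
      #{Y ∈ inputListTuples ι α ℓ | lrDist x Y ≤ m} := by
  have hq : (0 : ℝ) < Fintype.card α := by exact_mod_cast Fintype.card_pos
  have hsphere : (#{Y ∈ inputListTuples ι α ℓ | lrDist x Y = m} : ℝ) *
      (Fintype.card α : ℝ) ^ (m + (Fintype.card ι - m)) =
      (Fintype.card ι).choose m * #(inputListTuples ι α ℓ) * ((Fintype.card α : ℝ) - ℓ) ^ m *
        (ℓ : ℝ) ^ (Fintype.card ι - m) := by
    rw [Nat.add_sub_cancel' hm, ← Nat.cast_sub hℓ]
    exact_mod_cast card_filter_lrDist_eq_mul ℓ m x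
  calc _ = (#{Y ∈ inputListTuples ι α ℓ | lrDist x Y = m} : ℝ) := by
        rw [div_pow, div_pow]
        field_simp
        linear_combination -hsphere
    _ ≤ #{Y ∈ inputListTuples ι α ℓ | lrDist x Y ≤ m} := by
        exact_mod_cast card_le_card (monotone_filter_right _ fun _ _ h => le_of_eq h)

end ListRecovery

/-- `1 - H_{q,ℓ}(w)` is the base-`q` relative entropy of `w` with respect to `(q - ℓ) / q`. -/
theorem rpow_mul_one_sub_Hql_mul {q ℓ : ℕ} (hℓ : 0 < ℓ) (hℓq : ℓ < q) {w : ℝ} (hw0 : 0 < w)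
    (hw1 : w < 1) (t : ℝ) :
    (q : ℝ) ^ (t * (1 - Hql q ℓ w)) *
        ((((q : ℝ) - ℓ) / q) ^ (t * w) * ((ℓ : ℝ) / q) ^ (t * (1 - w))) =
      w ^ (t * w) * (1 - w) ^ (t * (1 - w)) := by
  have hℓR : (0 : ℝ) < ℓ := by exact_mod_cast hℓ
  have hqℓ : (0 : ℝ) < q - ℓ := by rw [sub_pos]; exact_mod_cast hℓq
  have hq1 : (1 : ℝ) < q := by exact_mod_cast (show 1 < q by omega)
  have hlogq : log q ≠ 0 := (log_pos hq1).ne'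
  have hw1' : 0 < 1 - w := by linarith
  rw [rpow_def_of_pos (by linarith), rpow_def_of_pos (by positivity),
    rpow_def_of_pos (by positivity), rpow_def_of_pos hw0, rpow_def_of_pos hw1', ← exp_add,
    ← exp_add, ← exp_add]
  congr 1
  simp only [Hql, logb]
  rw [log_div hqℓ.ne' hw0.ne', log_div hℓR.ne' hw1'.ne', log_div hqℓ.ne' (by positivity),
    log_div hℓR.ne' (by positivity)]
  field_simp
  ring

theorem inv_choose_mul_pow_mul_pow_le {q ℓ m n : ℕ} (hℓ : 0 < ℓ) (hℓq : ℓ < q) (hm : m ≠ 0)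
    (hmn : m < n) :
    ((n.choose m) * (((q : ℝ) - ℓ) / q) ^ m * ((ℓ : ℝ) / q) ^ (n - m))⁻¹ ≤
      √(8 * n * ((m : ℝ) / n) * (1 - (m : ℝ) / n)) *
        (q : ℝ) ^ ((n : ℝ) * (1 - Hql q ℓ ((m : ℝ) / n))) := by
  have hn : (0 : ℝ) < n := by exact_mod_cast hm.bot_lt.trans hmn
  have hqℓ : (0 : ℝ) < q - ℓ := by rw [sub_pos]; exact_mod_cast hℓq
  have hq : (0 : ℝ) < q := by linarith [(Nat.cast_nonneg ℓ : (0 : ℝ) ≤ ℓ)]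
  have hchoose := Nat.choose_pos hmn.le
  have hentropy := rpow_mul_one_sub_Hql_mul hℓ hℓq (w := m / n) (by positivity)
    ((div_lt_one hn).2 (by exact_mod_cast hmn)) n
  rw [mul_div_cancel₀ _ hn.ne', show (n : ℝ) * (1 - m / n) = (n - m : ℕ) by
    rw [Nat.cast_sub hmn.le]; field_simp] at hentropy
  simp only [rpow_natCast] at hentropy
  rw [inv_le_iff_one_le_mul₀ (by positivity)]
  calc 1 ≤ √(8 * n * ((m : ℝ) / n) * (1 - (m : ℝ) / n)) * n.choose m *
        ((m : ℝ) / n) ^ m * (1 - (m : ℝ) / n) ^ (n - m) :=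
          one_le_sqrt_mul_choose_mul_pow_mul_pow hm hmn
    _ = _ := by rw [mul_assoc _ (((m : ℝ) / n) ^ m), ← hentropy]; ring

theorem stmt17_general (q ℓ n m : ℕ) (hl1 : 1 ≤ ℓ) (hlq : ℓ ≤ q - 1)
    (hm1 : 1 ≤ m) (hmn : m ≤ n - 1) :
    ∃ (K : ℕ) (Y : Fin K → Fin n → Finset (Fin q)),
      (∀ k i, (Y k i).card = ℓ) ∧
      (∀ x : Fin n → Fin q, ∃ k,
        (Finset.univ.filter fun i => x i ∉ Y k i).card ≤ m) ∧
      (K : ℝ) ≤ (n : ℝ) * Real.log q *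
          Real.sqrt (8 * n * ((m : ℝ) / n) * (1 - (m : ℝ) / n)) *
          (q : ℝ) ^ ((n : ℝ) * (1 - Hql q ℓ ((m : ℝ) / n))) + 1 := by
  have hℓq : ℓ < q := by omega
  have hmn' : m < n := by omega
  have : Nonempty (Fin q) := ⟨⟨0, by omega⟩⟩
  set p : ℝ := n.choose m * (((q : ℝ) - ℓ) / q) ^ m * ((ℓ : ℝ) / q) ^ (n - m)
  have hp : 0 < p := by
    have : (0 : ℝ) < ℓ := by exact_mod_cast hl1
    have : (0 : ℝ) < q - ℓ := by rw [sub_pos]; exact_mod_cast hℓq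
    have : (0 : ℝ) < q := by linarith
    have := Nat.choose_pos hmn'.le
    positivity
  have hA : (inputListTuples (Fin n) (Fin q) ℓ).Nonempty := by
    rw [← card_pos, card_inputListTuples]
    exact pow_pos (Nat.choose_pos (by simpa using hℓq.le)) _
  obtain ⟨K, Y, hYA, hcover, hK⟩ := exists_cover_of_mul_card_le_card_filter _
    (fun x Y => lrDist x Y ≤ m) hp hA
    (fun x => by
      simpa using mul_card_le_card_filter_lrDist_le (ι := Fin n) (α := Fin q)
        (by simpa using hℓq.le) (by simpa using hmn'.le) x)
  refine ⟨K, Y, fun k i => (mem_powersetCard.1 (Fintype.mem_piFinset.1 (hYA k) i)).2, hcover, ?_⟩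
  calc (K : ℝ) ≤ n * log q * p⁻¹ + 1 := by simpa [log_pow, div_eq_mul_inv] using hK
    _ ≤ _ := by
      rw [mul_assoc _ (√_)]
      gcongr
      exact inv_choose_mul_pow_mul_pow_le hl1 hℓq (by omega) hmn'

theorem stmt17 (q ℓ n m : ℕ) (hq : 2 ≤ q) (hl1 : 1 ≤ ℓ) (hlq : ℓ ≤ q - 1)
    (hm1 : 1 ≤ m) (hmn : m ≤ n - 1) :
    ∃ (K : ℕ) (Y : Fin K → Fin n → Finset (Fin q)),
      (∀ k i, (Y k i).card = ℓ) ∧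
      (∀ x : Fin n → Fin q, ∃ k,
        (Finset.univ.filter fun i => x i ∉ Y k i).card ≤ m) ∧
      (K : ℝ) ≤ (n : ℝ) * Real.log q *
          Real.sqrt (8 * n * ((m : ℝ) / n) * (1 - (m : ℝ) / n)) *
          (q : ℝ) ^ ((n : ℝ) * (1 - Hql q ℓ ((m : ℝ) / n))) + 1 :=
  stmt17_general q ℓ n m hl1 hlq hm1 hmn
end
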